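/- Let V be a symmetric positive definite real d×d matrix, θ̂ ∈ ℝ^d, β ≥ 0, and B := {θ ∈ ℝ^d : ‖θ̂ − θ‖_V ≤ β}. Let α ∈ (0,1] and 0 < r_l ≤ r_b, and suppose θ* ∈ B, ψ*, ψ̄ ∈ ℝ^d with ‖ψ̄‖₂ ≤ 1, (ψ*)ᵀθ* ≥ r_b, ψ̄ᵀθ* < (1 − α)·r_b, and λ_min(V) > (2(2 − α)β/(α r_l))². Then sup_{θ ∈ B} (ψ*)ᵀθ > sup_{θ ∈ B} ψ̄ᵀθ. -/

import Mathlib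

/-!
Since `λ_min(V) ‖z‖₂² ≤ zᵀ V z`, every point of the ellipsoid `B` lies within Euclidean
distance `β / √λ_min(V)` of `θ̂`, so by Cauchy–Schwarz a unit vector `ψ̄` gains at most
`2β / √λ_min(V)` over its value at `θ*` anywhere on `B`. The eigenvalue condition makes this gain
smaller than `α r_b`, so `sup_B ψ̄ᵀθ < (1 - α) r_b + α r_b = r_b ≤ (ψ*)ᵀθ* ≤ sup_B (ψ*)ᵀθ`.
-/

open Matrix

open scoped Classical in
/-- smallest eigenvalue of a real matrix (junk value 0 if not Hermitian) -/
noncomputable def lamMin {d : ℕ} (V : Matrix (Fin d) (Fin d) ℝ) : ℝ :=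
  if h : V.IsHermitian then ⨅ i, h.eigenvalues i else 0

open scoped Classical in
/-- largest eigenvalue of a real matrix (junk value 0 if not Hermitian) -/
noncomputable def lamMax {d : ℕ} (V : Matrix (Fin d) (Fin d) ℝ) : ℝ :=
  if h : V.IsHermitian then ⨆ i, h.eigenvalues i else 0

/-- weighted norm ‖z‖_V = √(zᵀ V z) -/
noncomputable def wnorm {d : ℕ} (V : Matrix (Fin d) (Fin d) ℝ) (z : Fin d → ℝ) : ℝ :=
  Real.sqrt (z ⬝ᵥ V.mulVec z)

/-- Euclidean norm of a vector in ℝ^d -/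
noncomputable def eucNorm {d : ℕ} (z : Fin d → ℝ) : ℝ :=
  Real.sqrt (z ⬝ᵥ z)

theorem Matrix.IsHermitian.posSemidef_sub_smul_one {n : Type*} [Fintype n] [DecidableEq n]
    {A : Matrix n n ℝ} (hA : A.IsHermitian) {c : ℝ} (hc : ∀ i, c ≤ hA.eigenvalues i) :
    (A - c • 1).PosSemidef := by
  set U : Matrix n n ℝ := (hA.eigenvectorUnitary : Matrix n n ℝ)
  have hUU : U * Uᴴ = 1 := Unitary.mul_star_self_of_mem hA.eigenvectorUnitary.prop
  have hdiag : A - c • 1 = U * diagonal (fun i => hA.eigenvalues i - c) * Uᴴ := by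
    calc A - c • 1 = U * diagonal hA.eigenvalues * Uᴴ - U * (c • 1) * Uᴴ := by
          rw [Matrix.mul_smul, mul_one, Matrix.smul_mul, hUU]
          conv_lhs => rw [hA.spectral_theorem, Unitary.conjStarAlgAut_apply]
          rfl
      _ = _ := by rw [← sub_mul, ← mul_sub, smul_one_eq_diagonal, diagonal_sub]
  rw [hdiag]
  refine PosSemidef.mul_mul_conjTranspose_same ?_ _
  rw [posSemidef_diagonal_iff]
  exact fun i => sub_nonneg.mpr (hc i)

section Quadratic

variable {d : ℕ} {V : Matrix (Fin d) (Fin d) ℝ}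

theorem lamMin_le_eigenvalues (hV : V.IsHermitian) (i : Fin d) : lamMin V ≤ hV.eigenvalues i := by
  rw [lamMin, dif_pos hV]
  exact ciInf_le (Finite.bddBelow_range _) i

theorem lamMin_mul_dotProduct_self_le (hV : V.IsHermitian) (z : Fin d → ℝ) :
    lamMin V * (z ⬝ᵥ z) ≤ z ⬝ᵥ V *ᵥ z := by
  have := (hV.posSemidef_sub_smul_one (lamMin_le_eigenvalues hV)).dotProduct_mulVec_nonneg z
  rw [star_trivial, sub_mulVec, dotProduct_sub, smul_mulVec, one_mulVec, dotProduct_smul,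
    smul_eq_mul] at this
  linarith

theorem sqrt_lamMin_mul_eucNorm_le_wnorm (hV : V.IsHermitian) (z : Fin d → ℝ) :
    √(lamMin V) * eucNorm z ≤ wnorm V z := by
  rw [eucNorm, wnorm, ← Real.sqrt_mul' _ (by simpa using dotProduct_star_self_nonneg z)]
  exact Real.sqrt_le_sqrt (lamMin_mul_dotProduct_self_le hV z)

end Quadratic

theorem abs_dotProduct_le_eucNorm_mul {d : ℕ} (x y : Fin d → ℝ) :
    |x ⬝ᵥ y| ≤ eucNorm x * eucNorm y := by
  rw [eucNorm, eucNorm, ← Real.sqrt_mul (by simpa using dotProduct_star_self_nonneg x)]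
  refine Real.abs_le_sqrt ?_
  simpa only [dotProduct, sq] using Finset.sum_mul_sq_le_sq_mul_sq Finset.univ x y

theorem eucNorm_le_div_of_wnorm_le {d : ℕ} {V : Matrix (Fin d) (Fin d) ℝ} (hV : V.IsHermitian)
    (hpos : 0 < lamMin V) {z : Fin d → ℝ} {β : ℝ} (hz : wnorm V z ≤ β) :
    eucNorm z ≤ β / √(lamMin V) := by
  rw [le_div_iff₀' (Real.sqrt_pos.mpr hpos)]
  exact (sqrt_lamMin_mul_eucNorm_le_wnorm hV z).trans hz

theorem dotProduct_le_add_of_wnorm_le {d : ℕ} {V : Matrix (Fin d) (Fin d) ℝ}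
    (hV : V.IsHermitian) (hpos : 0 < lamMin V) {θhat θ θ' : Fin d → ℝ} {β : ℝ}
    (hθ : wnorm V (θhat - θ) ≤ β) (hθ' : wnorm V (θhat - θ') ≤ β) (ψ : Fin d → ℝ) :
    ψ ⬝ᵥ θ ≤ ψ ⬝ᵥ θ' + eucNorm ψ * (2 * β / √(lamMin V)) := by
  have hψ : 0 ≤ eucNorm ψ := Real.sqrt_nonneg _
  rw [← sub_le_iff_le_add']
  calc ψ ⬝ᵥ θ - ψ ⬝ᵥ θ' = ψ ⬝ᵥ (θhat - θ') - ψ ⬝ᵥ (θhat - θ) := by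
        simp only [dotProduct_sub]; ring
    _ ≤ |ψ ⬝ᵥ (θhat - θ')| + |ψ ⬝ᵥ (θhat - θ)| := (le_abs_self _).trans (abs_sub _ _)
    _ ≤ eucNorm ψ * eucNorm (θhat - θ') + eucNorm ψ * eucNorm (θhat - θ) := by
        gcongr <;> exact abs_dotProduct_le_eucNorm_mul _ _
    _ ≤ eucNorm ψ * (β / √(lamMin V)) + eucNorm ψ * (β / √(lamMin V)) := by
        gcongr <;> exact eucNorm_le_div_of_wnorm_le hV hpos ‹_›
    _ = eucNorm ψ * (2 * β / √(lamMin V)) := by ring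

theorem two_mul_div_sqrt_lt {α β rl rb l : ℝ} (hβ : 0 ≤ β) (hα0 : 0 < α) (hα1 : α ≤ 1)
    (hrl : 0 < rl) (hlb : rl ≤ rb) (hl : (2 * (2 - α) * β / (α * rl)) ^ 2 < l) :
    2 * β / √l < α * rb := by
  have hq : 0 ≤ 2 * (2 - α) * β / (α * rl) := by
    apply div_nonneg _ (by positivity); nlinarith
  have hqs : 2 * (2 - α) * β / (α * rl) < √l := (Real.lt_sqrt hq).mpr hl
  have hs : 0 < √l := hq.trans_lt hqs
  rw [div_lt_iff₀ (by positivity)] at hqs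
  rw [div_lt_iff₀ hs]
  calc 2 * β ≤ 2 * (2 - α) * β := by nlinarith
    _ < √l * (α * rl) := hqs
    _ ≤ α * rb * √l := by rw [mul_comm]; gcongr

theorem stmt16 {d : ℕ} (V : Matrix (Fin d) (Fin d) ℝ) (hV : V.PosDef)
    (θhat : Fin d → ℝ) (β : ℝ) (hβ : 0 ≤ β)
    (B : Set (Fin d → ℝ)) (hB : B = {θ : Fin d → ℝ | wnorm V (θhat - θ) ≤ β})
    (α rl rb : ℝ) (hα0 : 0 < α) (hα1 : α ≤ 1) (hrl : 0 < rl) (hlb : rl ≤ rb)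
    (θstar ψstar ψbar : Fin d → ℝ) (hθB : θstar ∈ B)
    (hψbar : eucNorm ψbar ≤ 1)
    (h1 : ψstar ⬝ᵥ θstar ≥ rb)
    (h2 : ψbar ⬝ᵥ θstar < (1 - α) * rb)
    (hlmin : lamMin V > (2 * (2 - α) * β / (α * rl)) ^ 2) :
    (⨆ θ : B, ψstar ⬝ᵥ (θ : Fin d → ℝ)) > ⨆ θ : B, ψbar ⬝ᵥ (θ : Fin d → ℝ) := by
  have hball : ∀ θ ∈ B, wnorm V (θhat - θ) ≤ β := fun θ hθ => by rwa [hB] at hθ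
  have hpos : 0 < lamMin V := (sq_nonneg _).trans_lt hlmin
  have hbound := fun ψ (θ : B) =>
    dotProduct_le_add_of_wnorm_le hV.isHermitian hpos (hball θ θ.2) (hball θstar hθB) ψ
  have hgap := two_mul_div_sqrt_lt hβ hα0 hα1 hrl hlb hlmin
  have : Nonempty B := ⟨⟨θstar, hθB⟩⟩
  have hψbar' : eucNorm ψbar * (2 * β / √(lamMin V)) ≤ 2 * β / √(lamMin V) :=
    mul_le_of_le_one_left (by positivity) hψbar
  calc (⨆ θ : B, ψbar ⬝ᵥ (θ : Fin d → ℝ))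
      ≤ ψbar ⬝ᵥ θstar + 2 * β / √(lamMin V) :=
        ciSup_le fun θ => (hbound ψbar θ).trans (by linarith)
    _ < (1 - α) * rb + α * rb := by linarith
    _ = rb := by ring
    _ ≤ ψstar ⬝ᵥ θstar := h1
    _ ≤ ⨆ θ : B, ψstar ⬝ᵥ (θ : Fin d → ℝ) :=
        le_ciSup (f := fun θ : B => ψstar ⬝ᵥ (θ : Fin d → ℝ))
          ⟨_, Set.forall_mem_range.mpr (hbound ψstar)⟩ ⟨θstar, hθB⟩
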